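/- (Tight relaxation) For every γ ≥ 0, min over nonempty proper subsets C ⊂ V of F̂_γ(C) equals the infimum of F_γ(f) over non-constant f ∈ ℝ^V. Moreover, for any non-constant f, F_γ(f) ≥ min_{t} F̂_γ(C^t_f) where C^t_f = {i : f_i > t}, i.e., optimal thresholding never increases the objective. -/

import Mathlib

open Finset

/-- cut(C, C̄) = 2 ∑_{i∈C, j∈C̄} w_{ij} -/
noncomputable def cutW {n : ℕ} (w : Fin n → Fin n → ℝ) (C : Finset (Fin n)) : ℝ :=
  2 * ∑ i ∈ C, ∑ j ∈ Cᶜ, w i j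

/-- generalized volume gvol(C) = ∑_{i∈C} b_i -/
noncomputable def gvol {n : ℕ} (b : Fin n → ℝ) (C : Finset (Fin n)) : ℝ := ∑ i ∈ C, b i

/-- bal(C) = 2 gvol(C) gvol(C̄) / gvol(V) -/
noncomputable def bal {n : ℕ} (b : Fin n → ℝ) (C : Finset (Fin n)) : ℝ :=
  2 * gvol b C * gvol b Cᶜ / gvol b Finset.univ

/-- NCut(C,C̄) = cut(C,C̄)/bal(C) -/
noncomputable def ncut {n : ℕ} (w : Fin n → Fin n → ℝ) (b : Fin n → ℝ) (C : Finset (Fin n)) : ℝ :=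
  cutW w C / bal b C

/-- M̂(C) = 2 ∑_{i∈C, j∈C̄} q^m_{ij}, twice the number of violated must-links -/
noncomputable def Mhat {n : ℕ} (qm : Fin n → Fin n → ℝ) (C : Finset (Fin n)) : ℝ :=
  2 * ∑ i ∈ C, ∑ j ∈ Cᶜ, qm i j

/-- N̂(C) = ∑_{i,j∈C} q^c_{ij} + ∑_{i,j∈C̄} q^c_{ij}, twice the number of violated cannot-links -/
noncomputable def Nhat {n : ℕ} (qc : Fin n → Fin n → ℝ) (C : Finset (Fin n)) : ℝ :=
  (∑ i ∈ C, ∑ j ∈ C, qc i j) + ∑ i ∈ Cᶜ, ∑ j ∈ Cᶜ, qc i j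

/-- F̂_γ(C) = (cut(C,C̄) + γ(M̂(C)+N̂(C))) / bal(C) -/
noncomputable def Fhat {n : ℕ} (w : Fin n → Fin n → ℝ) (b : Fin n → ℝ)
    (qm qc : Fin n → Fin n → ℝ) (γ : ℝ) (C : Finset (Fin n)) : ℝ :=
  (cutW w C + γ * (Mhat qm C + Nhat qc C)) / bal b C

/-- M(f) = ∑_{i,j} q^m_{ij} |f_i - f_j| -/
noncomputable def Mfun {n : ℕ} (qm : Fin n → Fin n → ℝ) (f : Fin n → ℝ) : ℝ :=
  ∑ i, ∑ j, qm i j * |f i - f j|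

/-- N(f) = vol(Q^c)(max f - min f) - ∑_{i,j} q^c_{ij} |f_i - f_j| -/
noncomputable def Nfun {n : ℕ} (qc : Fin n → Fin n → ℝ) (f : Fin n → ℝ) : ℝ :=
  (∑ i, ∑ j, qc i j) * ((⨆ i, f i) - (⨅ i, f i)) - ∑ i, ∑ j, qc i j * |f i - f j|

/-- S(f) = ‖B(f - (⟨f,b⟩/gvol(V)) 1)‖₁ with B = diag(b) -/
noncomputable def Sfun {n : ℕ} (b : Fin n → ℝ) (f : Fin n → ℝ) : ℝ :=
  ∑ i, |b i * (f i - (∑ j, f j * b j) / gvol b Finset.univ)|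

/-- F_γ(f), the continuous relaxation of F̂_γ -/
noncomputable def Fgam {n : ℕ} (w : Fin n → Fin n → ℝ) (b : Fin n → ℝ)
    (qm qc : Fin n → Fin n → ℝ) (γ : ℝ) (f : Fin n → ℝ) : ℝ :=
  ((∑ i, ∑ j, w i j * |f i - f j|) + γ * Mfun qm f + γ * Nfun qc f) / Sfun b f

/-- the superlevel set C^t_f = {i : f_i > t} -/
noncomputable def Ctf {n : ℕ} (f : Fin n → ℝ) (t : ℝ) : Finset (Fin n) :=
  Finset.univ.filter (fun i => t < f i)

/-! Let `v₀ < ⋯ < vₘ` be the values of a non-constant `f`. The layer-cake identity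
`|f i - f j| = ∑ₗ (vₗ₊₁ - vₗ) |1[f i > vₗ] - 1[f j > vₗ]|` writes the numerator of `F_γ(f)` as
`∑ₗ (vₗ₊₁ - vₗ) · (numerator of F̂_γ(C^{vₗ}_f))`, and the triangle inequality bounds `S(f)` by
`∑ₗ (vₗ₊₁ - vₗ) · bal(C^{vₗ}_f)`. A ratio of two such positive combinations dominates the
smallest of the ratios `F̂_γ(C^{vₗ}_f)`. Conversely, on the indicator of a set `C` the relaxation
takes the value `F̂_γ(C)`, so the two infima coincide. -/

theorem Finset.exists_div_le_sum_div {ι : Type*} {s : Finset ι} (hs : s.Nonempty)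
    (a : ι → ℝ) {d : ι → ℝ} (hd : ∀ i ∈ s, 0 < d i) :
    ∃ i ∈ s, a i / d i ≤ (∑ i ∈ s, a i) / ∑ i ∈ s, d i := by
  have hD : 0 < ∑ i ∈ s, d i := sum_pos hd hs
  set r := (∑ i ∈ s, a i) / ∑ i ∈ s, d i
  have hsum : ∑ i ∈ s, a i ≤ ∑ i ∈ s, r * d i := by
    rw [← mul_sum, div_mul_cancel₀ _ hD.ne']
  obtain ⟨i, hi, hle⟩ := exists_le_of_sum_le hs hsum
  exact ⟨i, hi, (div_le_iff₀ (hd i hi)).2 hle⟩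

theorem csInf_eq_csInf_of_subset_of_forall_exists_le {α : Type*}
    [ConditionallyCompleteLinearOrder α] {A B : Set α} (hA : A.Finite) (hAB : A ⊆ B)
    (hBA : ∀ x ∈ B, ∃ y ∈ A, y ≤ x) : sInf A = sInf B := by
  rcases A.eq_empty_or_nonempty with rfl | hne
  · have hB : B = ∅ := Set.eq_empty_of_forall_notMem fun x hx => by
      obtain ⟨y, hy, -⟩ := hBA x hx
      exact hy
    rw [hB]
  · refine (IsLeast.csInf_eq ⟨hAB (hne.csInf_mem hA), fun x hx => ?_⟩).symm
    obtain ⟨y, hy, hyx⟩ := hBA x hx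
    exact (csInf_le hA.bddBelow hy).trans hyx

theorem Finset.exists_strictMonoOn_image_Iic_eq {α : Type*} [LinearOrder α] (s : Finset α)
    (hs : s.Nonempty) :
    ∃ (m : ℕ) (v : ℕ → α), StrictMonoOn v (Set.Iic m) ∧ v '' Set.Iic m = s := by
  have hcard : 0 < #s := card_pos.2 hs
  let e := s.orderEmbOfFin rfl
  refine ⟨#s - 1, fun l => e ⟨min l (#s - 1), by omega⟩, ?_, ?_⟩
  · intro p hp q hq hpq
    simp only [Set.mem_Iic] at hp hq
    simp only [min_eq_left hp, min_eq_left hq]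
    exact e.strictMono (Fin.mk_lt_mk.2 hpq)
  · rw [← range_orderEmbOfFin s rfl]
    ext x
    simp only [Set.mem_image, Set.mem_Iic, Set.mem_range]
    constructor
    · rintro ⟨p, -, rfl⟩
      exact ⟨_, rfl⟩
    · rintro ⟨⟨p, hp⟩, rfl⟩
      exact ⟨p, by omega, by simp only [e, min_eq_left (by omega : p ≤ #s - 1)]⟩

section LayerCake

variable {ι : Type*} {v : ℕ → ℝ} {m : ℕ}

theorem ciInf_eq_of_image_Iic_eq_range {f : ι → ℝ} (hv : StrictMonoOn v (Set.Iic m))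
    (hvf : v '' Set.Iic m = Set.range f) : ⨅ i, f i = v 0 := by
  change sInf (Set.range f) = v 0
  rw [← hvf]
  refine IsLeast.csInf_eq ⟨⟨0, Set.mem_Iic.2 m.zero_le, rfl⟩, ?_⟩
  rintro _ ⟨p, hp, rfl⟩
  exact hv.monotoneOn (Set.mem_Iic.2 m.zero_le) hp p.zero_le

theorem ciSup_eq_of_image_Iic_eq_range {f : ι → ℝ} (hv : StrictMonoOn v (Set.Iic m))
    (hvf : v '' Set.Iic m = Set.range f) : ⨆ i, f i = v m := by
  change sSup (Set.range f) = v m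
  rw [← hvf]
  refine IsGreatest.csSup_eq ⟨⟨m, Set.mem_Iic.2 le_rfl, rfl⟩, ?_⟩
  rintro _ ⟨p, hp, rfl⟩
  exact hv.monotoneOn hp (Set.mem_Iic.2 le_rfl) hp

theorem abs_sub_eq_sum_gaps {p q : ℕ} (hv : StrictMonoOn v (Set.Iic m))
    (hp : p ≤ m) (hq : q ≤ m) :
    |v p - v q| = ∑ l ∈ range m, (v (l + 1) - v l) *
      |(if v l < v p then (1 : ℝ) else 0) - if v l < v q then 1 else 0| := by
  wlog hpq : p ≤ q generalizing p q
  · simp_rw [abs_sub_comm (v p), this hq hp (le_of_not_ge hpq), abs_sub_comm]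
  have hterm : ∀ l ∈ range m, (v (l + 1) - v l) *
      |(if v l < v p then (1 : ℝ) else 0) - if v l < v q then 1 else 0| =
      if l ∈ Ico p q then v (l + 1) - v l else 0 := by
    intro l hl
    have hl' : l ∈ Set.Iic m := Set.mem_Iic.2 (mem_range.1 hl).le
    simp only [hv.lt_iff_lt hl' hp, hv.lt_iff_lt hl' hq, mem_Ico]
    split_ifs <;> first | omega | simp
  rw [sum_congr rfl hterm, sum_ite_mem, inter_eq_right.2 fun l hl => by
    simp only [mem_range, mem_Ico] at hl ⊢; omega, sum_Ico_sub _ hpq,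
    abs_sub_comm, abs_of_nonneg (sub_nonneg.2 (hv.monotoneOn hp hq hpq))]

variable [Fintype ι]

theorem sum_mul_abs_sub_eq_sum_gaps (g : ι → ι → ℝ) {f : ι → ℝ}
    (hv : StrictMonoOn v (Set.Iic m)) (hvf : v '' Set.Iic m = Set.range f) :
    ∑ i, ∑ j, g i j * |f i - f j| = ∑ l ∈ range m, (v (l + 1) - v l) *
      ∑ i, ∑ j, g i j * |(if v l < f i then (1 : ℝ) else 0) - if v l < f j then 1 else 0| := by
  have hval (i : ι) : f i ∈ v '' Set.Iic m := hvf ▸ Set.mem_range_self i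
  choose p hp hpf using hval
  simp_rw [mul_sum]
  rw [eq_comm, sum_comm]
  refine sum_congr rfl fun i _ => ?_
  rw [sum_comm]
  refine sum_congr rfl fun j _ => ?_
  rw [← hpf i, ← hpf j, abs_sub_eq_sum_gaps hv (hp i) (hp j), mul_sum]
  exact sum_congr rfl fun l _ => by ring

theorem sum_mul_abs_sub_indicator [DecidableEq ι] {g : ι → ι → ℝ} (hg : ∀ i j, g i j = g j i)
    (C : Finset ι) :
    ∑ i, ∑ j, g i j * |(if i ∈ C then (1 : ℝ) else 0) - if j ∈ C then 1 else 0| =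
      2 * ∑ i ∈ C, ∑ j ∈ Cᶜ, g i j := by
  have hsplit : ∀ i j, g i j * |(if i ∈ C then (1 : ℝ) else 0) - if j ∈ C then 1 else 0| =
      (if i ∈ C then if j ∈ Cᶜ then g i j else 0 else 0) +
        if j ∈ C then if i ∈ Cᶜ then g j i else 0 else 0 := by
    intro i j
    by_cases hi : i ∈ C <;> by_cases hj : j ∈ C <;> simp [hi, hj, hg i j]
  simp only [hsplit, sum_add_distrib, sum_ite_irrel, sum_const_zero, sum_ite_mem, univ_inter]
  rw [sum_comm (s := Cᶜ)]
  ring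

end LayerCake

section Objective

variable {n : ℕ}

theorem cutW_nonneg {w : Fin n → Fin n → ℝ} (hw : ∀ i j, 0 ≤ w i j) (C : Finset (Fin n)) :
    0 ≤ cutW w C :=
  mul_nonneg zero_le_two (sum_nonneg fun i _ => sum_nonneg fun j _ => hw i j)

theorem Nhat_nonneg {qc : Fin n → Fin n → ℝ} (hqc : ∀ i j, 0 ≤ qc i j) (C : Finset (Fin n)) :
    0 ≤ Nhat qc C :=
  add_nonneg (sum_nonneg fun i _ => sum_nonneg fun j _ => hqc i j)
    (sum_nonneg fun i _ => sum_nonneg fun j _ => hqc i j)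

theorem Nhat_eq_sum_sub_cutW {qc : Fin n → Fin n → ℝ} (hqc : ∀ i j, qc i j = qc j i)
    (C : Finset (Fin n)) :
    Nhat qc C = ∑ i, ∑ j, qc i j - cutW qc C := by
  have hrow (i : Fin n) : ∑ j, qc i j = ∑ j ∈ C, qc i j + ∑ j ∈ Cᶜ, qc i j :=
    (sum_add_sum_compl C (qc i)).symm
  have hswap : ∑ i ∈ Cᶜ, ∑ j ∈ C, qc i j = ∑ i ∈ C, ∑ j ∈ Cᶜ, qc i j := by
    rw [sum_comm]
    exact sum_congr rfl fun i _ => sum_congr rfl fun j _ => hqc j i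
  rw [Nhat, cutW, ← sum_add_sum_compl C fun i => ∑ j, qc i j]
  simp only [hrow, sum_add_distrib, hswap]
  ring

theorem gvol_pos {b : Fin n → ℝ} (hb : ∀ i, 0 < b i) {C : Finset (Fin n)} (hC : C.Nonempty) :
    0 < gvol b C :=
  sum_pos (fun i _ => hb i) hC

theorem gvol_add_gvol_compl (b : Fin n → ℝ) (C : Finset (Fin n)) :
    gvol b C + gvol b Cᶜ = gvol b univ :=
  sum_add_sum_compl C b

theorem bal_pos {b : Fin n → ℝ} (hb : ∀ i, 0 < b i) {C : Finset (Fin n)} (hC : C.Nonempty)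
    (hCc : Cᶜ.Nonempty) : 0 < bal b C := by
  have h₁ := gvol_pos hb hC
  have h₂ := gvol_pos hb hCc
  rw [bal, ← gvol_add_gvol_compl]
  positivity

theorem cutW_mul_eq_bal_mul_gvol (b : Fin n → ℝ) (hV : gvol b univ ≠ 0) (C : Finset (Fin n)) :
    cutW (fun i j => b i * b j) C = bal b C * gvol b univ := by
  rw [cutW, bal, div_mul_cancel₀ _ hV, mul_assoc, gvol, gvol, sum_mul_sum]

end Objective

section Indicator

variable {ι : Type*} [DecidableEq ι] {C : Finset ι}

theorem ciSup_indicator_eq_one (hC : C.Nonempty) : ⨆ i, (if i ∈ C then (1 : ℝ) else 0) = 1 := by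
  obtain ⟨i, hi⟩ := hC
  refine IsGreatest.csSup_eq ⟨⟨i, if_pos hi⟩, Set.forall_mem_range.2 fun j => ?_⟩
  split_ifs <;> norm_num

theorem ciInf_indicator_eq_zero [Fintype ι] (hC : Cᶜ.Nonempty) :
    ⨅ i, (if i ∈ C then (1 : ℝ) else 0) = 0 := by
  obtain ⟨i, hi⟩ := hC
  refine IsLeast.csInf_eq ⟨⟨i, if_neg (mem_compl.1 hi)⟩, Set.forall_mem_range.2 fun j => ?_⟩
  split_ifs <;> norm_num

end Indicator

section Relaxation

variable {n : ℕ} {w : Fin n → Fin n → ℝ} {b : Fin n → ℝ} {qm qc : Fin n → Fin n → ℝ} {γ : ℝ}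

theorem Sfun_indicator (hb : ∀ i, 0 < b i) {C : Finset (Fin n)} (hC : C.Nonempty) :
    Sfun b (fun i => if i ∈ C then 1 else 0) = bal b C := by
  have hV : 0 < gvol b univ := gvol_pos hb (hC.mono (subset_univ C))
  have hsplit := gvol_add_gvol_compl b C
  have hmean : ∑ j, (if j ∈ C then (1 : ℝ) else 0) * b j = gvol b C := by
    simp only [ite_mul, one_mul, zero_mul, sum_ite_mem, univ_inter, gvol]
  have hin : ∀ i ∈ C, |b i * ((if i ∈ C then 1 else 0) - gvol b C / gvol b univ)| =
      b i * (gvol b Cᶜ / gvol b univ) := by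
    intro i hi
    rw [if_pos hi, show 1 - gvol b C / gvol b univ = gvol b Cᶜ / gvol b univ by
      field_simp; linarith]
    exact abs_of_nonneg (mul_nonneg (hb i).le (div_nonneg
      (sum_nonneg fun j _ => (hb j).le) hV.le))
  have hout : ∀ i ∈ Cᶜ, |b i * ((if i ∈ C then 1 else 0) - gvol b C / gvol b univ)| =
      b i * (gvol b C / gvol b univ) := by
    intro i hi
    rw [if_neg (mem_compl.1 hi), zero_sub, mul_neg, abs_neg]
    exact abs_of_nonneg (mul_nonneg (hb i).le (div_nonneg
      (sum_nonneg fun j _ => (hb j).le) hV.le))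
  rw [Sfun, hmean, ← sum_add_sum_compl C, sum_congr rfl hin, sum_congr rfl hout, ← sum_mul,
    ← sum_mul, bal]
  simp only [gvol]
  ring

theorem Fgam_indicator (hw : ∀ i j, w i j = w j i) (hb : ∀ i, 0 < b i)
    (hqm : ∀ i j, qm i j = qm j i) (hqc : ∀ i j, qc i j = qc j i) {C : Finset (Fin n)}
    (hC : C.Nonempty) (hCc : Cᶜ.Nonempty) :
    Fgam w b qm qc γ (fun i => if i ∈ C then 1 else 0) = Fhat w b qm qc γ C := by
  rw [Fgam, Fhat, Mfun, Nfun, sum_mul_abs_sub_indicator hw, sum_mul_abs_sub_indicator hqm,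
    sum_mul_abs_sub_indicator hqc, ciSup_indicator_eq_one hC, ciInf_indicator_eq_zero hCc,
    Sfun_indicator hb hC, Nhat_eq_sum_sub_cutW hqc, cutW, Mhat, cutW]
  ring

theorem Sfun_pos (hb : ∀ i, 0 < b i) {f : Fin n → ℝ} (hf : ∃ i j, f i ≠ f j) :
    0 < Sfun b f := by
  obtain ⟨i, j, hij⟩ := hf
  obtain ⟨k, hk⟩ : ∃ k, f k ≠ (∑ j, f j * b j) / gvol b univ := by
    by_contra! h
    exact hij ((h i).trans (h j).symm)
  exact sum_pos' (fun _ _ => abs_nonneg _)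
    ⟨k, mem_univ k, abs_pos.2 (mul_ne_zero (hb k).ne' (sub_ne_zero.2 hk))⟩

theorem Sfun_le_sum_mul_abs_sub (hb : ∀ i, 0 ≤ b i) (hV : 0 < gvol b univ) (f : Fin n → ℝ) :
    Sfun b f ≤ (∑ i, ∑ j, b i * b j * |f i - f j|) / gvol b univ := by
  rw [Sfun, sum_div univ (fun i => ∑ j, b i * b j * |f i - f j|)]
  refine sum_le_sum fun i _ => ?_
  have hcentre : b i * (f i - (∑ j, f j * b j) / gvol b univ) =
      (∑ j, b i * b j * (f i - f j)) / gvol b univ := by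
    have hsum : ∑ j, b i * b j * (f i - f j) =
        b i * f i * gvol b univ - b i * ∑ j, f j * b j := by
      rw [gvol, mul_sum, mul_sum, ← sum_sub_distrib]
      exact sum_congr rfl fun j _ => by ring
    rw [hsum, eq_div_iff hV.ne']
    field_simp
  rw [hcentre, abs_div, abs_of_pos hV]
  gcongr
  refine (abs_sum_le_sum_abs _ _).trans_eq (sum_congr rfl fun j _ => ?_)
  rw [abs_mul, abs_of_nonneg (mul_nonneg (hb i) (hb j))]

end Relaxation

section Thresholding

variable {n : ℕ} {w : Fin n → Fin n → ℝ} {b : Fin n → ℝ} {qm qc : Fin n → Fin n → ℝ} {γ : ℝ}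
  {f : Fin n → ℝ} {v : ℕ → ℝ} {m : ℕ}

theorem mem_Ctf {t : ℝ} {i : Fin n} : i ∈ Ctf f t ↔ t < f i := by
  simp [Ctf]

theorem sum_mul_abs_sub_eq_sum_cutW {g : Fin n → Fin n → ℝ} (hg : ∀ i j, g i j = g j i)
    (hv : StrictMonoOn v (Set.Iic m)) (hvf : v '' Set.Iic m = Set.range f) :
    ∑ i, ∑ j, g i j * |f i - f j| = ∑ l ∈ range m, (v (l + 1) - v l) * cutW g (Ctf f (v l)) := by
  rw [sum_mul_abs_sub_eq_sum_gaps g hv hvf]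
  refine sum_congr rfl fun l _ => ?_
  rw [cutW, ← sum_mul_abs_sub_indicator hg]
  simp only [mem_Ctf]

theorem Fgam_numerator_eq_sum (hw : ∀ i j, w i j = w j i) (hqm : ∀ i j, qm i j = qm j i)
    (hqc : ∀ i j, qc i j = qc j i) (hv : StrictMonoOn v (Set.Iic m))
    (hvf : v '' Set.Iic m = Set.range f) :
    (∑ i, ∑ j, w i j * |f i - f j|) + γ * Mfun qm f + γ * Nfun qc f =
      ∑ l ∈ range m, (v (l + 1) - v l) * (cutW w (Ctf f (v l)) +
        γ * (Mhat qm (Ctf f (v l)) + Nhat qc (Ctf f (v l)))) := by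
  have hterm : ∀ l ∈ range m, (v (l + 1) - v l) * (cutW w (Ctf f (v l)) +
      γ * (Mhat qm (Ctf f (v l)) + Nhat qc (Ctf f (v l)))) =
      (v (l + 1) - v l) * cutW w (Ctf f (v l)) + γ * ((v (l + 1) - v l) * cutW qm (Ctf f (v l)))
        + γ * ((∑ i, ∑ j, qc i j) * (v (l + 1) - v l)
          - (v (l + 1) - v l) * cutW qc (Ctf f (v l))) := by
    intro l _
    rw [Nhat_eq_sum_sub_cutW hqc, show Mhat qm _ = cutW qm _ from rfl]
    ring
  rw [sum_congr rfl hterm, Mfun, Nfun, ciSup_eq_of_image_Iic_eq_range hv hvf,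
    ciInf_eq_of_image_Iic_eq_range hv hvf, sum_mul_abs_sub_eq_sum_cutW hw hv hvf,
    sum_mul_abs_sub_eq_sum_cutW hqm hv hvf, sum_mul_abs_sub_eq_sum_cutW hqc hv hvf,
    sum_add_distrib, sum_add_distrib, ← mul_sum, ← mul_sum, sum_sub_distrib, ← mul_sum,
    sum_range_sub]

theorem Sfun_le_sum_bal (hb : ∀ i, 0 ≤ b i) (hv : StrictMonoOn v (Set.Iic m))
    (hvf : v '' Set.Iic m = Set.range f) (hV : 0 < gvol b univ) :
    Sfun b f ≤ ∑ l ∈ range m, (v (l + 1) - v l) * bal b (Ctf f (v l)) := by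
  calc Sfun b f ≤ (∑ i, ∑ j, b i * b j * |f i - f j|) / gvol b univ :=
        Sfun_le_sum_mul_abs_sub hb hV f
    _ = ∑ l ∈ range m, (v (l + 1) - v l) * bal b (Ctf f (v l)) := by
        rw [sum_mul_abs_sub_eq_sum_cutW (fun i j => mul_comm (b i) (b j)) hv hvf, sum_div]
        refine sum_congr rfl fun l _ => ?_
        rw [cutW_mul_eq_bal_mul_gvol b hV.ne', mul_div_assoc, mul_div_cancel_right₀ _ hV.ne']

theorem exists_Fhat_Ctf_le_Fgam_of_image_Iic_eq_range (hγ : 0 ≤ γ)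
    (hw_symm : ∀ i j, w i j = w j i) (hw_nonneg : ∀ i j, 0 ≤ w i j) (hb : ∀ i, 0 < b i)
    (hqm_symm : ∀ i j, qm i j = qm j i) (hqm_nonneg : ∀ i j, 0 ≤ qm i j)
    (hqc_symm : ∀ i j, qc i j = qc j i) (hqc_nonneg : ∀ i j, 0 ≤ qc i j)
    (hf : ∃ i j, f i ≠ f j) (hv : StrictMonoOn v (Set.Iic m))
    (hvf : v '' Set.Iic m = Set.range f) (hm : 0 < m) :
    ∃ l < m, Fhat w b qm qc γ (Ctf f (v l)) ≤ Fgam w b qm qc γ f := by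
  have hval (p : ℕ) (hp : p ≤ m) : v p ∈ Set.range f := hvf ▸ Set.mem_image_of_mem v hp
  have hgap : ∀ l ∈ range m, 0 < v (l + 1) - v l := fun l hl => by
    have hl := mem_range.1 hl
    exact sub_pos.2 (hv (Set.mem_Iic.2 hl.le) (Set.mem_Iic.2 hl) l.lt_succ_self)
  have hbal : ∀ l ∈ range m, 0 < bal b (Ctf f (v l)) := fun l hl => by
    have hl := mem_range.1 hl
    obtain ⟨i, hi⟩ := hval m le_rfl
    obtain ⟨j, hj⟩ := hval l hl.le
    refine bal_pos hb ⟨i, mem_Ctf.2 ?_⟩ ⟨j, mem_compl.2 fun h => (mem_Ctf.1 h).ne' hj⟩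
    exact hi ▸ hv (Set.mem_Iic.2 hl.le) (Set.mem_Iic.2 le_rfl) hl
  have hV : 0 < gvol b univ := gvol_pos hb (univ_nonempty_iff.2 ⟨hf.choose⟩)
  set N : ℕ → ℝ := fun l =>
    cutW w (Ctf f (v l)) + γ * (Mhat qm (Ctf f (v l)) + Nhat qc (Ctf f (v l)))
  have hN : ∀ l, 0 ≤ N l := fun l => add_nonneg (cutW_nonneg hw_nonneg _)
    (mul_nonneg hγ (add_nonneg (cutW_nonneg hqm_nonneg _) (Nhat_nonneg hqc_nonneg _)))
  obtain ⟨l, hl, hle⟩ := exists_div_le_sum_div (nonempty_range_iff.2 hm.ne')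
    (fun l => (v (l + 1) - v l) * N l) fun l hl => mul_pos (hgap l hl) (hbal l hl)
  refine ⟨l, mem_range.1 hl, ?_⟩
  calc Fhat w b qm qc γ (Ctf f (v l))
      = (v (l + 1) - v l) * N l / ((v (l + 1) - v l) * bal b (Ctf f (v l))) :=
        (mul_div_mul_left _ _ (hgap l hl).ne').symm
    _ ≤ _ := hle
    _ ≤ (∑ l ∈ range m, (v (l + 1) - v l) * N l) / Sfun b f :=
        div_le_div_of_nonneg_left (sum_nonneg fun l hl => mul_nonneg (hgap l hl).le (hN l))
          (Sfun_pos hb hf) (Sfun_le_sum_bal (fun i => (hb i).le) hv hvf hV)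
    _ = Fgam w b qm qc γ f := by
        rw [Fgam, Fgam_numerator_eq_sum hw_symm hqm_symm hqc_symm hv hvf]

theorem Ctf_nonempty [Nonempty (Fin n)] {t : ℝ} (ht : t < ⨆ i, f i) :
    (Ctf f t).Nonempty := by
  obtain ⟨i, hi⟩ := exists_lt_of_lt_ciSup ht
  exact ⟨i, mem_Ctf.2 hi⟩

theorem Ctf_ne_univ [Nonempty (Fin n)] {t : ℝ} (ht : (⨅ i, f i) ≤ t) :
    Ctf f t ≠ univ := by
  obtain ⟨i, hi⟩ := exists_eq_ciInf_of_finite (f := f)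
  intro h
  exact (mem_Ctf.1 (h ▸ mem_univ i)).not_ge (hi ▸ ht)

theorem exists_Fhat_Ctf_le_Fgam (hγ : 0 ≤ γ)
    (hw_symm : ∀ i j, w i j = w j i) (hw_nonneg : ∀ i j, 0 ≤ w i j) (hb : ∀ i, 0 < b i)
    (hqm_symm : ∀ i j, qm i j = qm j i) (hqm_nonneg : ∀ i j, 0 ≤ qm i j)
    (hqc_symm : ∀ i j, qc i j = qc j i) (hqc_nonneg : ∀ i j, 0 ≤ qc i j)
    (hf : ∃ i j, f i ≠ f j) :
    ∃ t, (⨅ i, f i) ≤ t ∧ t < (⨆ i, f i) ∧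
      Fhat w b qm qc γ (Ctf f t) ≤ Fgam w b qm qc γ f := by
  obtain ⟨m, v, hv, hvf⟩ := (univ.image f).exists_strictMonoOn_image_Iic_eq
    ((univ_nonempty_iff.2 ⟨hf.choose⟩).image f)
  rw [coe_image, coe_univ, Set.image_univ] at hvf
  have hm : 0 < m := by
    obtain ⟨i, j, hij⟩ := hf
    obtain ⟨p, hp, hpi⟩ : f i ∈ v '' Set.Iic m := hvf ▸ Set.mem_range_self i
    obtain ⟨q, hq, hqj⟩ : f j ∈ v '' Set.Iic m := hvf ▸ Set.mem_range_self j
    by_contra! hm0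
    have hpq : p = q := by
      simp only [Set.mem_Iic] at hp hq
      omega
    exact hij (by rw [← hpi, ← hqj, hpq])
  obtain ⟨l, hl, hle⟩ := exists_Fhat_Ctf_le_Fgam_of_image_Iic_eq_range hγ hw_symm hw_nonneg hb
    hqm_symm hqm_nonneg hqc_symm hqc_nonneg hf hv hvf hm
  refine ⟨v l, ?_, ?_, hle⟩
  · rw [ciInf_eq_of_image_Iic_eq_range hv hvf]
    exact hv.monotoneOn (Set.mem_Iic.2 m.zero_le) (Set.mem_Iic.2 hl.le) l.zero_le
  · rw [ciSup_eq_of_image_Iic_eq_range hv hvf]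
    exact hv (Set.mem_Iic.2 hl.le) (Set.mem_Iic.2 le_rfl) hl

end Thresholding

theorem stmt_5_general {n : ℕ} (w : Fin n → Fin n → ℝ) (b : Fin n → ℝ)
    (qm qc : Fin n → Fin n → ℝ) (γ : ℝ) (hγ : 0 ≤ γ)
    (hw_symm : ∀ i j, w i j = w j i) (hw_nonneg : ∀ i j, 0 ≤ w i j)
    (hb : ∀ i, 0 < b i)
    (hqm01 : ∀ i j, qm i j = 0 ∨ qm i j = 1) (hqm_symm : ∀ i j, qm i j = qm j i)
    (hqc01 : ∀ i j, qc i j = 0 ∨ qc i j = 1) (hqc_symm : ∀ i j, qc i j = qc j i)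
    :
    sInf {x : ℝ | ∃ C : Finset (Fin n), C ≠ ∅ ∧ C ≠ Finset.univ ∧ x = Fhat w b qm qc γ C}
      = sInf {x : ℝ | ∃ f : Fin n → ℝ, (∃ i j, f i ≠ f j) ∧ x = Fgam w b qm qc γ f}
    ∧ ∀ f : Fin n → ℝ, (∃ i j, f i ≠ f j) →
        ∃ t : ℝ, (⨅ i, f i) ≤ t ∧ t < (⨆ i, f i) ∧
          Fhat w b qm qc γ (Ctf f t) ≤ Fgam w b qm qc γ f := by
  have hqm_nonneg (i j : Fin n) : 0 ≤ qm i j := by rcases hqm01 i j with h | h <;> simp [h]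
  have hqc_nonneg (i j : Fin n) : 0 ≤ qc i j := by rcases hqc01 i j with h | h <;> simp [h]
  have hthresh (f : Fin n → ℝ) (hf : ∃ i j, f i ≠ f j) :=
    exists_Fhat_Ctf_le_Fgam hγ hw_symm hw_nonneg hb hqm_symm hqm_nonneg hqc_symm hqc_nonneg hf
  refine ⟨csInf_eq_csInf_of_subset_of_forall_exists_le
    ((Set.finite_range (Fhat w b qm qc γ)).subset ?_) ?_ ?_, hthresh⟩
  · rintro _ ⟨C, -, -, rfl⟩
    exact ⟨C, rfl⟩
  · rintro _ ⟨C, hC, hCu, rfl⟩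
    obtain ⟨i, hi⟩ := nonempty_iff_ne_empty.2 hC
    obtain ⟨j, hj⟩ : Cᶜ.Nonempty := by rwa [nonempty_iff_ne_empty, Ne, compl_eq_empty_iff]
    refine ⟨_, ⟨i, j, by simp [hi, mem_compl.1 hj]⟩, (Fgam_indicator hw_symm hb hqm_symm hqc_symm
      ⟨i, hi⟩ ⟨j, hj⟩).symm⟩
  · rintro _ ⟨f, hf, rfl⟩
    have : Nonempty (Fin n) := ⟨hf.choose⟩
    obtain ⟨t, ht_inf, ht_sup, hle⟩ := hthresh f hf
    exact ⟨_, ⟨Ctf f t, nonempty_iff_ne_empty.1 (Ctf_nonempty ht_sup), Ctf_ne_univ ht_inf, rfl⟩,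
      hle⟩

/-- Theorem 3 (tight relaxation): for γ ≥ 0 the minimum of F̂_γ over nontrivial subsets
equals the infimum of F_γ over non-constant functions, and for every non-constant f
optimal thresholding yields a set with no larger value of the objective. -/
theorem stmt_5 {n : ℕ} (hn : 1 < n) (w : Fin n → Fin n → ℝ) (b : Fin n → ℝ)
    (qm qc : Fin n → Fin n → ℝ) (γ : ℝ) (hγ : 0 ≤ γ)
    (hw_symm : ∀ i j, w i j = w j i) (hw_nonneg : ∀ i j, 0 ≤ w i j)
    (hb : ∀ i, 0 < b i)
    (hqm01 : ∀ i j, qm i j = 0 ∨ qm i j = 1) (hqm_symm : ∀ i j, qm i j = qm j i)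
    (hqc01 : ∀ i j, qc i j = 0 ∨ qc i j = 1) (hqc_symm : ∀ i j, qc i j = qc j i)
    (hconn : ∀ C : Finset (Fin n), C ≠ ∅ → C ≠ Finset.univ → 0 < cutW w C)
    :
    sInf {x : ℝ | ∃ C : Finset (Fin n), C ≠ ∅ ∧ C ≠ Finset.univ ∧ x = Fhat w b qm qc γ C}
      = sInf {x : ℝ | ∃ f : Fin n → ℝ, (∃ i j, f i ≠ f j) ∧ x = Fgam w b qm qc γ f}
    ∧ ∀ f : Fin n → ℝ, (∃ i j, f i ≠ f j) →
        ∃ t : ℝ, (⨅ i, f i) ≤ t ∧ t < (⨆ i, f i) ∧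
          Fhat w b qm qc γ (Ctf f t) ≤ Fgam w b qm qc γ f :=
  stmt_5_general w b qm qc γ hγ hw_symm hw_nonneg hb hqm01 hqm_symm hqc01 hqc_symm
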